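/- Let 0 < r < 1, define f(m) = r(6m + 8m² + 3m³)(1 + m)^{−3} for m ≠ −1 and g(m) = 6m + 4m² + m³, and let m* ∈ (−1, 0) be the unique solution of f(m) = g(m) in (−1, 0). Then 0 < 1 + m* < 1, g′(m*) > 0, and f′(m*) > g′(m*); in particular f′(m*)/g′(m*) > 1, so the blown-up map at the swan point has a hyperbolic saddle at (0, m*) with contracting eigenvalue 1 + m* ∈ (0, 1) and expanding eigenvalue f′(m*)/g′(m*) > 1. -/

import Mathlib

/-!
Write `A = 6 + 4m + m²` and `B = g'(m) = 6 + 8m + 3m²`. Then `f'(m) = r A / (1 + m)⁴`, and for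
`m ≠ 0` the equation `f = g` reads `r B = A (1 + m)³`. Eliminating `r` at `m*` gives
`f'(m*) = A² / (B (1 + m*))`, so `f'(m*) > g'(m*)` amounts to `A² > B² (1 + m*)`, which holds
because `0 < B < A` on `(-1, 0)` and `1 + m* < 1`.
-/

lemma hasDerivAt_cubic (m : ℝ) :
    HasDerivAt (fun x : ℝ => 6 * x + 4 * x ^ 2 + x ^ 3) (6 + 8 * m + 3 * m ^ 2) m := by
  refine ((((hasDerivAt_id m).const_mul 6).add ((hasDerivAt_pow 2 m).const_mul 4)).add
    (hasDerivAt_pow 3 m)).congr_deriv ?_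
  push_cast
  ring

lemma hasDerivAt_rational (r : ℝ) {m : ℝ} (hm : 1 + m ≠ 0) :
    HasDerivAt (fun x : ℝ => r * (6 * x + 8 * x ^ 2 + 3 * x ^ 3) / (1 + x) ^ 3)
      (r * (6 + 4 * m + m ^ 2) / (1 + m) ^ 4) m := by
  have hnum : HasDerivAt (fun x : ℝ => r * (6 * x + 8 * x ^ 2 + 3 * x ^ 3))
      (r * (6 + 16 * m + 9 * m ^ 2)) m := by
    refine (((((hasDerivAt_id m).const_mul 6).add ((hasDerivAt_pow 2 m).const_mul 8)).add
      ((hasDerivAt_pow 3 m).const_mul 3)).const_mul r).congr_deriv ?_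
    push_cast
    ring
  have hden : HasDerivAt (fun x : ℝ => (1 + x) ^ 3) (3 * (1 + m) ^ 2) m := by
    refine (((hasDerivAt_id m).const_add 1).pow 3).congr_deriv ?_
    simp
  refine (hnum.div hden (pow_ne_zero 3 hm)).congr_deriv ?_
  field_simp
  ring

lemma cubic_deriv_pos (m : ℝ) : 0 < 6 + 8 * m + 3 * m ^ 2 := by
  nlinarith [sq_nonneg (3 * m + 4)]

lemma cubic_deriv_lt (m : ℝ) (hm : m ∈ Set.Ioo (-2 : ℝ) 0) :
    6 + 8 * m + 3 * m ^ 2 < 6 + 4 * m + m ^ 2 := by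
  nlinarith [mul_pos (neg_pos.mpr hm.2) (show 0 < 2 + m by linarith [hm.1])]

lemma mul_eq_of_rational_eq_cubic {r m : ℝ} (hm0 : m ≠ 0) (hm : 1 + m ≠ 0)
    (h : r * (6 * m + 8 * m ^ 2 + 3 * m ^ 3) / (1 + m) ^ 3 = 6 * m + 4 * m ^ 2 + m ^ 3) :
    r * (6 + 8 * m + 3 * m ^ 2) = (6 + 4 * m + m ^ 2) * (1 + m) ^ 3 := by
  rw [div_eq_iff (pow_ne_zero 3 hm)] at h
  apply mul_left_cancel₀ hm0
  linear_combination h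

lemma lt_mul_div_pow_four_of_mul_eq {r A B s : ℝ} (hB : 0 < B) (hBA : B < A) (hs0 : 0 < s)
    (hs1 : s ≤ 1) (h : r * B = A * s ^ 3) : B < r * A / s ^ 4 := by
  rw [lt_div_iff₀ (by positivity)]
  have hsq : B ^ 2 * s < A ^ 2 := by
    calc B ^ 2 * s ≤ B ^ 2 := mul_le_of_le_one_right (by positivity) hs1
      _ < A ^ 2 := by gcongr
  refine lt_of_mul_lt_mul_right ?_ hB.le
  calc B * s ^ 4 * B = B ^ 2 * s * s ^ 3 := by ring
    _ < A ^ 2 * s ^ 3 := by gcongr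
    _ = r * A * B := by linear_combination (-A) * h

theorem swan_saddle_hyperbolic_general (r : ℝ)
    (f g : ℝ → ℝ)
    (hf : ∀ m : ℝ, m ≠ -1 →
      f m = r * (6 * m + 8 * m ^ 2 + 3 * m ^ 3) / (1 + m) ^ 3)
    (hg : ∀ m : ℝ, g m = 6 * m + 4 * m ^ 2 + m ^ 3)
    (ms : ℝ) (hms : ms ∈ Set.Ioo (-1 : ℝ) 0) (hfg : f ms = g ms) :
    0 < 1 + ms ∧ 1 + ms < 1 ∧
    0 < deriv g ms ∧ deriv g ms < deriv f ms ∧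
    1 < deriv f ms / deriv g ms := by
  obtain ⟨hm1, hm0⟩ := hms
  have hne : ms ≠ -1 := hm1.ne'
  have hs : 1 + ms ≠ 0 := by linarith
  have hgd : HasDerivAt g (6 + 8 * ms + 3 * ms ^ 2) ms := funext hg ▸ hasDerivAt_cubic ms
  have hfd : HasDerivAt f (r * (6 + 4 * ms + ms ^ 2) / (1 + ms) ^ 4) ms :=
    (hasDerivAt_rational r hs).congr_of_eventuallyEq
      ((eventually_ne_nhds hne).mono fun m hm => hf m hm)
  have hr := mul_eq_of_rational_eq_cubic hm0.ne hs (by rw [← hf ms hne, ← hg ms, hfg])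
  have hg' : 0 < deriv g ms := hgd.deriv ▸ cubic_deriv_pos ms
  have hlt : deriv g ms < deriv f ms := by
    rw [hgd.deriv, hfd.deriv]
    exact lt_mul_div_pow_four_of_mul_eq (cubic_deriv_pos ms)
      (cubic_deriv_lt ms ⟨by linarith, hm0⟩) (by linarith) (by linarith) hr
  exact ⟨by linarith, by linarith, hg', hlt, (one_lt_div hg').mpr hlt⟩

/-- **Hyperbolicity of the swan-point fixed point `(0, m*)`.**
Let `0 < r < 1`, `f(m) = r(6m + 8m² + 3m³)(1 + m)⁻³` (for `m ≠ −1`),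
`g(m) = 6m + 4m² + m³`, and let `m* ∈ (−1, 0)` be the unique solution of
`f(m) = g(m)` in `(−1, 0)`.  Then `0 < 1 + m* < 1`, `g′(m*) > 0` and
`f′(m*) > g′(m*)`; in particular `f′(m*)/g′(m*) > 1`, so the blown-up map at the
swan point has a hyperbolic saddle at `(0, m*)` with contracting eigenvalue
`1 + m* ∈ (0, 1)` and expanding eigenvalue `f′(m*)/g′(m*) > 1`. -/
theorem swan_saddle_hyperbolic (r : ℝ) (hr0 : 0 < r) (hr1 : r < 1)
    (f g : ℝ → ℝ)
    (hf : ∀ m : ℝ, m ≠ -1 →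
      f m = r * (6 * m + 8 * m ^ 2 + 3 * m ^ 3) / (1 + m) ^ 3)
    (hg : ∀ m : ℝ, g m = 6 * m + 4 * m ^ 2 + m ^ 3)
    (ms : ℝ) (hms : ms ∈ Set.Ioo (-1 : ℝ) 0) (hfg : f ms = g ms)
    (huniq : ∀ m ∈ Set.Ioo (-1 : ℝ) 0, f m = g m → m = ms) :
    0 < 1 + ms ∧ 1 + ms < 1 ∧
    0 < deriv g ms ∧ deriv g ms < deriv f ms ∧
    1 < deriv f ms / deriv g ms :=
  swan_saddle_hyperbolic_general r f g hf hg ms hms hfg
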